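/- Let X be a complex Banach space, A a positive operator on X, and α ∈ (0,1). Write A^{-β} = (sin(πβ)/π) ∫₀^∞ u^{-β}(u+A)^{-1} du for β ∈ (0,1). Then the following identities hold, all integrals being convergent Bochner integrals: (i) (sin(πα)/π) ∫₀^∞ s^{1-α}(s²+A)^{-1} ds = cos(πα/2)·A^{-α/2}; (ii) (sin(πα)/π) ∫₀^∞ s^{-α}(s²+A)^{-1} ds = sin(πα/2)·A^{-(α+1)/2}; (iii) for every x ∈ D(A), (sin(πα)/π) ∫₀^∞ s^{-α} A(s²+A)^{-1} x ds = sin(πα/2)·A^{-(α+1)/2}(Ax), where A(s²+A)^{-1} = I − s²(s²+A)^{-1}. -/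

import Mathlib

open MeasureTheory Real Set

noncomputable section

/-- `R` is a two-sided bounded inverse of `lam + A : D(A) → X`;
in particular `lam + A` is bijective from `D(A)` onto `X` with bounded inverse `R`. -/
def ResolventAt {X : Type*} [NormedAddCommGroup X] [NormedSpace ℂ X]
    (A : X →ₗ.[ℂ] X) (lam : ℂ) (R : X →L[ℂ] X) : Prop :=
  (∀ x : A.domain, R (lam • (x : X) + A x) = x) ∧
  (∀ y : X, ∃ h : R y ∈ A.domain, lam • R y + A ⟨R y, h⟩ = y)

/-- `A` is a positive operator with constant `M ≥ 1` and resolvent family `R`. -/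
structure IsPositive {X : Type*} [NormedAddCommGroup X] [NormedSpace ℂ X]
    (A : X →ₗ.[ℂ] X) (M : ℝ) (R : ℝ → X →L[ℂ] X) : Prop where
  dense_domain : Dense (A.domain : Set X)
  closed_graph : IsClosed (A.graph : Set (X × X))
  one_le : 1 ≤ M
  resolvent : ∀ s : ℝ, 0 ≤ s → ResolventAt A (s : ℂ) (R s)
  bound : ∀ s : ℝ, 0 ≤ s → (1 + s) * ‖R s‖ ≤ M

/-- The Balakrishnan fractional power `A ^ (-α)`, expressed through the
resolvent family `R` of `A`:  `A⁻ᵅ = (sin (π α) / π) ∫₀^∞ s⁻ᵅ (s+A)⁻¹ ds`. -/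
def negPow {X : Type*} [NormedAddCommGroup X] [NormedSpace ℂ X]
    (R : ℝ → X →L[ℂ] X) (α : ℝ) : X →L[ℂ] X :=
  (Real.sin (π * α) / π) • ∫ s in Ioi (0 : ℝ), s ^ (-α) • R s


/-! Substituting `u = s²` turns each integral into half of a Balakrishnan integral,
`∫₀^∞ s^(1-2β) (s²+A)⁻¹ ds = ½ ∫₀^∞ u^(-β) (u+A)⁻¹ du`, which converges for `β ∈ (0,1)` because
`‖(u+A)⁻¹‖ ≤ M / (1+u)` and `u ↦ (u+A)⁻¹` is continuous by the resolvent identity. The constants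
then match through `sin (πα) = 2 sin (πα/2) cos (πα/2)` and `sin (π(α+1)/2) = cos (πα/2)`, with
`β = α/2` for (i) and `β = (α+1)/2` for (ii). Part (iii) reduces to (ii) because
`x - s² (s²+A)⁻¹ x = (s²+A)⁻¹ A x` on `D(A)`. -/

section ChangeOfVariables

variable {E : Type*} [NormedAddCommGroup E] [NormedSpace ℝ E] {g : ℝ → E} {β γ : ℝ}

lemma rpow_smul_comp_sq_eqOn (hγ : γ = 1 - 2 * β) :
    EqOn (fun s : ℝ => s ^ ((2 : ℝ) - 1) • (s ^ (2 : ℝ)) ^ (-β) • g (s ^ (2 : ℝ)))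
      (fun s : ℝ => s ^ γ • g (s ^ 2)) (Ioi 0) := fun s (hs : 0 < s) => by
  simp only
  rw [smul_smul, ← Real.rpow_mul hs.le, ← Real.rpow_add hs, Real.rpow_two, hγ]
  congr 2
  ring

lemma integrableOn_rpow_smul_comp_sq_iff (hγ : γ = 1 - 2 * β) :
    IntegrableOn (fun s : ℝ => s ^ γ • g (s ^ 2)) (Ioi 0) ↔
      IntegrableOn (fun u : ℝ => u ^ (-β) • g u) (Ioi 0) := by
  rw [← integrableOn_congr_fun (rpow_smul_comp_sq_eqOn hγ) measurableSet_Ioi,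
    integrableOn_Ioi_comp_rpow_iff' (fun u => u ^ (-β) • g u) two_ne_zero]

lemma integral_rpow_smul_comp_sq (hγ : γ = 1 - 2 * β) :
    ∫ s in Ioi 0, s ^ γ • g (s ^ 2) = (2 : ℝ)⁻¹ • ∫ u in Ioi 0, u ^ (-β) • g u := by
  rw [← integral_comp_rpow_Ioi_of_pos (g := fun u => u ^ (-β) • g u) two_pos,
    eq_inv_smul_iff₀ two_ne_zero, ← integral_smul]
  refine setIntegral_congr_fun measurableSet_Ioi fun s hs => ?_
  rw [mul_smul]
  exact congrArg (2 • ·) (rpow_smul_comp_sq_eqOn hγ hs).symm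

end ChangeOfVariables

namespace IsPositive

variable {X : Type*} [NormedAddCommGroup X] [NormedSpace ℂ X]
  {A : X →ₗ.[ℂ] X} {M : ℝ} {R : ℝ → X →L[ℂ] X}

lemma const_nonneg (hA : IsPositive A M R) : 0 ≤ M := zero_le_one.trans hA.one_le

lemma norm_le_div (hA : IsPositive A M R) {s : ℝ} (hs : 0 ≤ s) : ‖R s‖ ≤ M / (1 + s) := by
  rw [le_div_iff₀ (by linarith)]
  linarith [hA.bound s hs]

lemma norm_le (hA : IsPositive A M R) {s : ℝ} (hs : 0 ≤ s) : ‖R s‖ ≤ M :=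
  (hA.norm_le_div hs).trans (div_le_self hA.const_nonneg (by linarith))

lemma apply_map (hA : IsPositive A M R) {t : ℝ} (ht : 0 ≤ t) (x : A.domain) :
    R t (A x) = x - t • R t x := by
  have h := (hA.resolvent t ht).1 x
  rw [map_add, map_smul, Complex.coe_smul] at h
  exact eq_sub_of_add_eq' h

lemma apply_sub_apply (hA : IsPositive A M R) {s t : ℝ} (hs : 0 ≤ s) (ht : 0 ≤ t) (y : X) :
    R s y - R t y = ((t : ℂ) - s) • R s (R t y) := by
  obtain ⟨hmem, hy⟩ := (hA.resolvent t ht).2 y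
  have h := (hA.resolvent s hs).1 ⟨R t y, hmem⟩
  rw [eq_sub_of_add_eq' hy,
    show (s : ℂ) • R t y + (y - (t : ℂ) • R t y) = y + ((s : ℂ) - t) • R t y by module,
    map_add, map_smul] at h
  linear_combination (norm := module) h

lemma norm_sub_le (hA : IsPositive A M R) {s t : ℝ} (hs : 0 ≤ s) (ht : 0 ≤ t) :
    ‖R s - R t‖ ≤ M * M * |s - t| := by
  have hM := hA.const_nonneg
  refine ContinuousLinearMap.opNorm_le_bound _ (by positivity) fun y => ?_
  rw [sub_apply, hA.apply_sub_apply hs ht, norm_smul, ← Complex.ofReal_sub, Complex.norm_real,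
    Real.norm_eq_abs, abs_sub_comm]
  calc |s - t| * ‖R s (R t y)‖ ≤ |s - t| * (M * (M * ‖y‖)) := by
        gcongr
        refine (R s).le_of_opNorm_le (hA.norm_le hs) _ |>.trans ?_
        gcongr
        exact (R t).le_of_opNorm_le (hA.norm_le ht) _
    _ = M * M * |s - t| * ‖y‖ := by ring

lemma continuousOn (hA : IsPositive A M R) : ContinuousOn R (Ici 0) := by
  refine (LipschitzOnWith.of_dist_le_mul (K := (M * M).toNNReal) fun s hs t ht => ?_).continuousOn
  rw [dist_eq_norm, Real.dist_eq, Real.coe_toNNReal _ (mul_nonneg hA.const_nonneg hA.const_nonneg)]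
  exact hA.norm_sub_le hs ht

lemma integrableOn_rpow_smul (hA : IsPositive A M R) {β : ℝ} (hβ₀ : 0 < β) (hβ₁ : β < 1) :
    IntegrableOn (fun u : ℝ => u ^ (-β) • R u) (Ioi 0) := by
  have hcont : ContinuousOn (fun u : ℝ => u ^ (-β) • R u) (Ioi 0) :=
    (continuousOn_id.rpow_const fun u hu => Or.inl (ne_of_gt hu)).smul
      (hA.continuousOn.mono Ioi_subset_Ici_self)
  have hnorm : ∀ u : ℝ, 0 < u → ‖u ^ (-β) • R u‖ = u ^ (-β) * ‖R u‖ := fun u hu => by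
    rw [norm_smul, Real.norm_of_nonneg (by positivity)]
  rw [← Ioc_union_Ioi_eq_Ioi zero_le_one]
  refine IntegrableOn.union ?_ ?_
  · have hdom : IntegrableOn (fun u : ℝ => M * u ^ (-β)) (Ioc 0 1) :=
      ((intervalIntegrable_iff_integrableOn_Ioc_of_le zero_le_one).mp
        (intervalIntegral.intervalIntegrable_rpow' (by linarith))).const_mul M
    refine hdom.mono' ((hcont.mono Ioc_subset_Ioi_self).aestronglyMeasurable measurableSet_Ioc) ?_
    filter_upwards [ae_restrict_mem measurableSet_Ioc] with u hu
    rw [hnorm u hu.1, mul_comm]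
    exact mul_le_mul_of_nonneg_right (hA.norm_le hu.1.le) (Real.rpow_nonneg hu.1.le _)
  · have hdom : IntegrableOn (fun u : ℝ => M * u ^ (-β - 1)) (Ioi 1) :=
      (integrableOn_Ioi_rpow_of_lt (by linarith) one_pos).const_mul M
    refine hdom.mono' ((hcont.mono (Ioi_subset_Ioi zero_le_one)).aestronglyMeasurable
      measurableSet_Ioi) ?_
    filter_upwards [ae_restrict_mem measurableSet_Ioi] with u (hu : 1 < u)
    have hu₀ : 0 < u := one_pos.trans hu
    calc ‖u ^ (-β) • R u‖ = u ^ (-β) * ‖R u‖ := hnorm u hu₀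
      _ ≤ u ^ (-β) * (M / u) := by
        gcongr
        exact (hA.norm_le_div hu₀.le).trans
          (div_le_div_of_nonneg_left hA.const_nonneg hu₀ (by linarith))
      _ = M * u ^ (-β - 1) := by
        rw [Real.rpow_sub_one hu₀.ne']
        ring

lemma rpow_smul_sub_sq_smul_eq (hA : IsPositive A M R) (γ : ℝ) (x : A.domain) :
    (fun s : ℝ => s ^ γ • ((x : X) - s ^ 2 • R (s ^ 2) x))
      = fun s : ℝ => (s ^ γ • R (s ^ 2)) (A x) := by
  ext s
  rw [smul_apply, hA.apply_map (sq_nonneg s)]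

lemma integrableOn_rpow_smul_sub_sq_smul (hA : IsPositive A M R) {γ : ℝ}
    (hint : IntegrableOn (fun s : ℝ => s ^ γ • R (s ^ 2)) (Ioi 0)) (x : A.domain) :
    IntegrableOn (fun s : ℝ => s ^ γ • ((x : X) - s ^ 2 • R (s ^ 2) x)) (Ioi 0) := by
  rw [hA.rpow_smul_sub_sq_smul_eq]
  exact (ContinuousLinearMap.apply ℂ X (A x)).integrable_comp hint

lemma integral_rpow_smul_sub_sq_smul (hA : IsPositive A M R) {γ : ℝ}
    (hint : IntegrableOn (fun s : ℝ => s ^ γ • R (s ^ 2)) (Ioi 0)) (x : A.domain) :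
    ∫ s in Ioi 0, s ^ γ • ((x : X) - s ^ 2 • R (s ^ 2) x)
      = (∫ s in Ioi 0, s ^ γ • R (s ^ 2)) (A x) := by
  rw [hA.rpow_smul_sub_sq_smul_eq, ContinuousLinearMap.integral_apply hint]

end IsPositive

theorem stmt17_general {X : Type*} [NormedAddCommGroup X] [NormedSpace ℂ X]
    (M : ℝ) (A : X →ₗ.[ℂ] X) (R : ℝ → X →L[ℂ] X) (hA : IsPositive A M R)
    (α : ℝ) (hα : α ∈ Ioo (0 : ℝ) 1) :
    -- (i)  ∫ s¹⁻ᵅ (s²+A)⁻¹ ds = cos (πα/2) A^{-α/2}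
    (IntegrableOn (fun s : ℝ => s ^ (1 - α) • R (s ^ 2)) (Ioi 0) ∧
      (Real.sin (π * α) / π) • ∫ s in Ioi (0 : ℝ), s ^ (1 - α) • R (s ^ 2)
        = Real.cos (π * α / 2) • negPow R (α / 2)) ∧
    -- (ii)  ∫ s⁻ᵅ (s²+A)⁻¹ ds = sin (πα/2) A^{-(α+1)/2}
    (IntegrableOn (fun s : ℝ => s ^ (-α) • R (s ^ 2)) (Ioi 0) ∧
      (Real.sin (π * α) / π) • ∫ s in Ioi (0 : ℝ), s ^ (-α) • R (s ^ 2)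
        = Real.sin (π * α / 2) • negPow R ((α + 1) / 2)) ∧
    -- (iii)  ∀ x ∈ D(A), ∫ s⁻ᵅ A(s²+A)⁻¹ x ds = sin (πα/2) A^{-(α+1)/2} (A x)
    (∀ x : A.domain,
      IntegrableOn (fun s : ℝ =>
        s ^ (-α) • ((x : X) - s ^ 2 • (R (s ^ 2)) (x : X))) (Ioi 0) ∧
      (Real.sin (π * α) / π) • ∫ s in Ioi (0 : ℝ),
          s ^ (-α) • ((x : X) - s ^ 2 • (R (s ^ 2)) (x : X))
        = Real.sin (π * α / 2) • negPow R ((α + 1) / 2) (A x)) := by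
  obtain ⟨hα₀, hα₁⟩ := hα
  have hγ₁ : 1 - α = 1 - 2 * (α / 2) := by ring
  have hγ₂ : -α = 1 - 2 * ((α + 1) / 2) := by ring
  have hint₁ := (integrableOn_rpow_smul_comp_sq_iff hγ₁).mpr
    (hA.integrableOn_rpow_smul (β := α / 2) (by linarith) (by linarith))
  have hint₂ := (integrableOn_rpow_smul_comp_sq_iff hγ₂).mpr
    (hA.integrableOn_rpow_smul (β := (α + 1) / 2) (by linarith) (by linarith))
  have hsin : Real.sin (π * α) = 2 * Real.sin (π * α / 2) * Real.cos (π * α / 2) := by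
    rw [← Real.sin_two_mul]
    ring_nf
  have hii : (Real.sin (π * α) / π) • ∫ s in Ioi (0 : ℝ), s ^ (-α) • R (s ^ 2)
      = Real.sin (π * α / 2) • negPow R ((α + 1) / 2) := by
    rw [integral_rpow_smul_comp_sq hγ₂, negPow, smul_smul, smul_smul,
      show π * ((α + 1) / 2) = π * α / 2 + π / 2 by ring, Real.sin_add_pi_div_two, hsin]
    ring_nf
  refine ⟨⟨hint₁, ?_⟩, ⟨hint₂, hii⟩, fun x => ⟨hA.integrableOn_rpow_smul_sub_sq_smul hint₂ x, ?_⟩⟩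
  · rw [integral_rpow_smul_comp_sq hγ₁, negPow, smul_smul, smul_smul,
      show π * (α / 2) = π * α / 2 by ring, hsin]
    ring_nf
  · rw [hA.integral_rpow_smul_sub_sq_smul hint₂ x, ← smul_apply, hii, smul_apply]

/-- the change-of-variable identities used to compute the fractional
powers of `Λ₄`, where `(s²+A)⁻¹ = R (s²)` and `A(s²+A)⁻¹ = I - s²(s²+A)⁻¹`. -/
theorem stmt17 {X : Type*} [NormedAddCommGroup X] [NormedSpace ℂ X] [CompleteSpace X]
    (M : ℝ) (A : X →ₗ.[ℂ] X) (R : ℝ → X →L[ℂ] X) (hA : IsPositive A M R)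
    (α : ℝ) (hα : α ∈ Ioo (0 : ℝ) 1) :
    -- (i)  ∫ s¹⁻ᵅ (s²+A)⁻¹ ds = cos (πα/2) A^{-α/2}
    (IntegrableOn (fun s : ℝ => s ^ (1 - α) • R (s ^ 2)) (Ioi 0) ∧
      (Real.sin (π * α) / π) • ∫ s in Ioi (0 : ℝ), s ^ (1 - α) • R (s ^ 2)
        = Real.cos (π * α / 2) • negPow R (α / 2)) ∧
    -- (ii)  ∫ s⁻ᵅ (s²+A)⁻¹ ds = sin (πα/2) A^{-(α+1)/2}
    (IntegrableOn (fun s : ℝ => s ^ (-α) • R (s ^ 2)) (Ioi 0) ∧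
      (Real.sin (π * α) / π) • ∫ s in Ioi (0 : ℝ), s ^ (-α) • R (s ^ 2)
        = Real.sin (π * α / 2) • negPow R ((α + 1) / 2)) ∧
    -- (iii)  ∀ x ∈ D(A), ∫ s⁻ᵅ A(s²+A)⁻¹ x ds = sin (πα/2) A^{-(α+1)/2} (A x)
    (∀ x : A.domain,
      IntegrableOn (fun s : ℝ =>
        s ^ (-α) • ((x : X) - s ^ 2 • (R (s ^ 2)) (x : X))) (Ioi 0) ∧
      (Real.sin (π * α) / π) • ∫ s in Ioi (0 : ℝ),
          s ^ (-α) • ((x : X) - s ^ 2 • (R (s ^ 2)) (x : X))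
        = Real.sin (π * α / 2) • negPow R ((α + 1) / 2) (A x)) :=
  stmt17_general M A R hA α hα
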